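/- arXiv:0706.2370 — 3 statements merged into one kernel-verified Lean document; each statement's English description precedes it below -/
import Mathlib

section
/- Assume that: (i) there exists ρ > 0 with |∂_a γ_1^{(i)}(a,b)| ≥ ρ for i ∈ {1,2} and all (a,b) ∈ Δ₁ × Δ₂; (ii) there exists K > 1 such that |f_{a,b}'(x)| ≥ K for all (a,b) ∈ Δ₁ × Δ₂ and all x ∈ I ∖ C_{δ₁}(a,b); (iii) Kρ − ‖∂_aF‖_{C⁰} ≥ (3/4)K; and (iv) ‖∂_aF‖_{C⁰} · Σ_{j=2}^∞ K^{−j} ≤ 1/4. Then for every i ∈ {1,2}, every (a,b) ∈ Δ₁ × Δ₂ and every n ≥ 2 such that γ_j^{(i)}(a,b) ∈ I ∖ C_{δ₁}(a,b) for all 1 ≤ j ≤ n−1, one has |∂_a γ_n^{(i)}(a,b)| ≥ (1/2) K^{n−1}. -/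
open Set Finset

/-! Write `Dⱼ = ∂ₐγⱼ`. Off the critical neighbourhood the recursion gives
`|Dⱼ₊₁| ≥ K |Dⱼ| - ‖∂ₐF‖₀`, so `|Dₙ| / Kⁿ⁻¹ ≥ |D₁| - ‖∂ₐF‖₀ ∑_{j=1}^{n-1} K⁻ʲ`.
By (i) and (iii) the first two terms contribute at least `3/4`, and by (iv) the remaining
terms of the sum cost at most `1/4`. -/

lemma mul_abs_sub_le_abs_mul_add {K M u x v : ℝ} (hu : K ≤ |u|) (hv : |v| ≤ M) :
    K * |x| - M ≤ |u * x + v| :=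
  calc K * |x| - M ≤ |u * x| - |v| := by
        rw [abs_mul]; gcongr
    _ ≤ |u * x + v| := abs_sub_abs_le_abs_add _ _

lemma pow_mul_sub_sum_le_of_step {e : ℕ → ℝ} {K M : ℝ} (hK : 0 < K) {m : ℕ}
    (hstep : ∀ k < m, K * e k - M ≤ e (k + 1)) :
    K ^ m * (e 0 - M * ∑ k ∈ range m, (K ^ (k + 1))⁻¹) ≤ e m := by
  induction m with
  | zero => simp
  | succ m ih =>
    have hprev := ih fun k hk => hstep k (by omega)
    calc K ^ (m + 1) * (e 0 - M * ∑ k ∈ range (m + 1), (K ^ (k + 1))⁻¹)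
        = K * (K ^ m * (e 0 - M * ∑ k ∈ range m, (K ^ (k + 1))⁻¹)) - M := by
          rw [sum_range_succ]; field_simp; ring
      _ ≤ K * e m - M := by gcongr
      _ ≤ e (m + 1) := hstep m (by omega)

lemma sum_range_inv_pow_add_two_le_tsum {K : ℝ} (hK : 1 < K) (m : ℕ) :
    ∑ j ∈ range m, (K ^ (j + 2))⁻¹ ≤ ∑' j : ℕ, (K ^ (j + 2))⁻¹ := by
  have hgeom : Summable fun j : ℕ => (K ^ j)⁻¹ := by
    simpa only [inv_pow] using
      summable_geometric_of_lt_one (by positivity) (inv_lt_one_of_one_lt₀ hK)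
  exact Summable.sum_le_tsum _ (fun j _ => by positivity)
    ((summable_nat_add_iff 2).mpr hgeom)

theorem stmt_1_general
    (F : ℝ → ℝ → ℝ → ℝ)
    (x1 x2 a1 a2 b1 b2 : ℝ)
    -- critical curves
    (γ : ℕ → Fin 2 → ℝ → ℝ → ℝ)
    -- δ-neighborhoods of the critical set
    (Cδ : ℝ → ℝ → ℝ → Set ℝ)
    (Δ₁ Δ₂ : Set ℝ) (hΔ1 : Δ₁ ⊆ Icc a1 a2) (hΔ2 : Δ₂ ⊆ Icc b1 b2)
    (δ₁ : ℝ)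
    -- C⁰ bound on ∂ₐF
    (Ma : ℝ)
    (hMa : ∀ x ∈ Icc x1 x2, ∀ a ∈ Icc a1 a2, ∀ b ∈ Icc b1 b2,
      |deriv (fun a' => F x a' b) a| ≤ Ma)
    -- recursion (e:cr) relating spatial and parametric derivatives
    (hrec : ∀ i : Fin 2, ∀ n : ℕ, ∀ a ∈ Δ₁, ∀ b ∈ Δ₂,
      deriv (fun a' => γ (n + 1) i a' b) a =
        deriv (fun x => F x a b) (γ n i a b) * deriv (fun a' => γ n i a' b) a
          + deriv (fun a' => F (γ n i a b) a' b) a)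
    (ρ K : ℝ) (hK : 1 < K)
    -- (i)
    (hi : ∀ i : Fin 2, ∀ a ∈ Δ₁, ∀ b ∈ Δ₂, ρ ≤ |deriv (fun a' => γ 1 i a' b) a|)
    -- (ii)
    (hii : ∀ a ∈ Δ₁, ∀ b ∈ Δ₂, ∀ x ∈ Icc x1 x2 \ Cδ δ₁ a b,
      K ≤ |deriv (fun x' => F x' a b) x|)
    -- (iii)
    (hiii : (3 / 4) * K ≤ K * ρ - Ma)
    -- (iv)
    (hiv : Ma * (∑' j : ℕ, (K ^ (j + 2))⁻¹) ≤ 1 / 4) :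
    ∀ i : Fin 2, ∀ a ∈ Δ₁, ∀ b ∈ Δ₂, ∀ n : ℕ, 2 ≤ n →
      (∀ j, 1 ≤ j → j ≤ n - 1 → γ j i a b ∈ Icc x1 x2 \ Cδ δ₁ a b) →
      (1 / 2) * K ^ (n - 1) ≤ |deriv (fun a' => γ n i a' b) a| := by
  intro i a ha b hb n hn hgood
  obtain ⟨m, rfl⟩ : ∃ m, n = m + 2 := ⟨n - 2, by omega⟩
  have hK0 : 0 < K := one_pos.trans hK
  have hMa_orbit : ∀ j, 1 ≤ j → j ≤ m + 1 →
      |deriv (fun a' => F (γ j i a b) a' b) a| ≤ Ma := fun j h1 h2 =>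
    hMa _ (hgood j h1 (by omega)).1 a (hΔ1 ha) b (hΔ2 hb)
  have hMa0 : 0 ≤ Ma := (abs_nonneg _).trans (hMa_orbit 1 le_rfl (by omega))
  have hgrowth := pow_mul_sub_sum_le_of_step (m := m + 1)
    (e := fun k => |deriv (fun a' => γ (k + 1) i a' b) a|) hK0 fun k hk => by
      rw [hrec i (k + 1) a ha b hb]
      exact mul_abs_sub_le_abs_mul_add (hii a ha b hb _ (hgood (k + 1) (by omega) (by omega)))
        (hMa_orbit (k + 1) (by omega) (by omega))
  rw [sum_range_succ'] at hgrowth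
  have hfirst : 3 / 4 ≤ |deriv (fun a' => γ 1 i a' b) a| - Ma * (K ^ (0 + 1))⁻¹ := by
    rw [zero_add, pow_one, ← div_eq_mul_inv, le_sub_iff_add_le, ← le_sub_iff_add_le',
      div_le_iff₀ hK0]
    nlinarith [hi i a ha b hb]
  have htail : Ma * ∑ k ∈ range m, (K ^ (k + 1 + 1))⁻¹ ≤ 1 / 4 :=
    (mul_le_mul_of_nonneg_left (sum_range_inv_pow_add_two_le_tsum hK m) hMa0).trans hiv
  calc (1 / 2) * K ^ (m + 2 - 1)
      ≤ K ^ (m + 1) * (|deriv (fun a' => γ (0 + 1) i a' b) a|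
          - Ma * (∑ k ∈ range m, (K ^ (k + 1 + 1))⁻¹ + (K ^ (0 + 1))⁻¹)) := by
        rw [show m + 2 - 1 = m + 1 by omega, mul_comm]
        gcongr
        linarith
    _ ≤ |deriv (fun a' => γ (m + 2) i a' b) a| := hgrowth

/-- Exponential growth of parametric derivatives of the critical curves.
In the setting of the two-parameter family `f_{a,b}(x) = F x a b` with two critical
points `c1 a b`, `c2 a b` and critical curves `γ n i a b = f_{a,b}^[n](cᵢ a b)`, assume
(i) `|∂ₐ γ 1 i| ≥ ρ` on `Δ₁ × Δ₂`, (ii) `|f_{a,b}'| ≥ K > 1` off the `δ₁`-neighborhood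
of the critical set, (iii) `Kρ − ‖∂ₐF‖₀ ≥ (3/4)K`, (iv) `‖∂ₐF‖₀ · Σ_{j≥2} K^{−j} ≤ 1/4`.
Then whenever `γ j i (a,b) ∈ I ∖ C_{δ₁}(a,b)` for `1 ≤ j ≤ n−1` (with `n ≥ 2`),
one has `|∂ₐ γ n i (a,b)| ≥ (1/2) K^{n−1}`. -/
theorem stmt_1
    (F : ℝ → ℝ → ℝ → ℝ)
    (x1 x2 a1 a2 b1 b2 : ℝ)
    (hF : ContDiff ℝ 2 (fun p : ℝ × ℝ × ℝ => F p.1 p.2.1 p.2.2))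
    (hFmaps : ∀ x ∈ Icc x1 x2, ∀ a ∈ Icc a1 a2, ∀ b ∈ Icc b1 b2, F x a b ∈ Icc x1 x2)
    (c1 c2 : ℝ → ℝ → ℝ)
    (hc1C1 : ContDiffOn ℝ 1 (fun p : ℝ × ℝ => c1 p.1 p.2) (Icc a1 a2 ×ˢ Icc b1 b2))
    (hc2C1 : ContDiffOn ℝ 1 (fun p : ℝ × ℝ => c2 p.1 p.2) (Icc a1 a2 ×ˢ Icc b1 b2))
    (hc1 : ∀ a ∈ Icc a1 a2, ∀ b ∈ Icc b1 b2,
      c1 a b ∈ Icc x1 x2 ∧ deriv (fun x => F x a b) (c1 a b) = 0)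
    (hc2 : ∀ a ∈ Icc a1 a2, ∀ b ∈ Icc b1 b2,
      c2 a b ∈ Icc x1 x2 ∧ deriv (fun x => F x a b) (c2 a b) = 0)
    -- critical curves
    (γ : ℕ → Fin 2 → ℝ → ℝ → ℝ)
    (hγ1 : ∀ n a b, γ n 0 a b = (fun x => F x a b)^[n] (c1 a b))
    (hγ2 : ∀ n a b, γ n 1 a b = (fun x => F x a b)^[n] (c2 a b))
    -- δ-neighborhoods of the critical set
    (Cδ : ℝ → ℝ → ℝ → Set ℝ)
    (hCδ : ∀ δ a b, Cδ δ a b = {x | |x - c1 a b| < δ ∨ |x - c2 a b| < δ})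
    (Δ₁ Δ₂ : Set ℝ) (hΔ1 : Δ₁ ⊆ Icc a1 a2) (hΔ2 : Δ₂ ⊆ Icc b1 b2)
    (δ₁ : ℝ) (hδ₁ : 0 < δ₁)
    -- C⁰ bound on ∂ₐF
    (Ma : ℝ)
    (hMa : ∀ x ∈ Icc x1 x2, ∀ a ∈ Icc a1 a2, ∀ b ∈ Icc b1 b2,
      |deriv (fun a' => F x a' b) a| ≤ Ma)
    -- recursion (e:cr) relating spatial and parametric derivatives
    (hrec : ∀ i : Fin 2, ∀ n : ℕ, ∀ a ∈ Δ₁, ∀ b ∈ Δ₂,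
      deriv (fun a' => γ (n + 1) i a' b) a =
        deriv (fun x => F x a b) (γ n i a b) * deriv (fun a' => γ n i a' b) a
          + deriv (fun a' => F (γ n i a b) a' b) a)
    (ρ K : ℝ) (hρ : 0 < ρ) (hK : 1 < K)
    -- (i)
    (hi : ∀ i : Fin 2, ∀ a ∈ Δ₁, ∀ b ∈ Δ₂, ρ ≤ |deriv (fun a' => γ 1 i a' b) a|)
    -- (ii)
    (hii : ∀ a ∈ Δ₁, ∀ b ∈ Δ₂, ∀ x ∈ Icc x1 x2 \ Cδ δ₁ a b,
      K ≤ |deriv (fun x' => F x' a b) x|)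
    -- (iii)
    (hiii : (3 / 4) * K ≤ K * ρ - Ma)
    -- (iv)
    (hiv : Ma * (∑' j : ℕ, (K ^ (j + 2))⁻¹) ≤ 1 / 4) :
    ∀ i : Fin 2, ∀ a ∈ Δ₁, ∀ b ∈ Δ₂, ∀ n : ℕ, 2 ≤ n →
      (∀ j, 1 ≤ j → j ≤ n - 1 → γ j i a b ∈ Icc x1 x2 \ Cδ δ₁ a b) →
      (1 / 2) * K ^ (n - 1) ≤ |deriv (fun a' => γ n i a' b) a| :=
  stmt_1_general F x1 x2 a1 a2 b1 b2 γ Cδ Δ₁ Δ₂ hΔ1 hΔ2 δ₁ Ma hMa hrec ρ K hK hi hii hiii hiv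
end

section
/- There exists K₀ = K₀(Φ) ≥ 2 such that for every K ≥ K₀ there exists L₀ = L₀(K, Φ) > 0 with the following property. For every L ≥ L₀ and every a ∈ [0,2π), setting f = f_{a,L}, σ = 2 k₁^{−1} L^{−1} K³ and V = {x ∈ S¹ : |f'(x)| ≤ K}: if for every c ∈ C and every n ≥ 1 one has d(f^n(c), C) ≥ σ, then f is a Misiurewicz map with this choice of neighborhood V. -/
open Set

/-- Distance on the circle `S¹ = ℝ/2πℤ`, computed on lifts. -/
noncomputable def dCirc (x y : ℝ) : ℝ := ⨅ k : ℤ, |x - y - 2 * Real.pi * k|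

/-- A map `f ∈ C²(S¹, S¹)` (represented by a lift working with `2π`-periodic data)
satisfies the Misiurewicz conditions with the given set `V` ⊇ `C = {x | f' x = 0}`:
(A1)/(A2) expansion outside `V`, (B) critical orbits stay outside `V`,
(C1)/(C2) nondegeneracy and derivative recovery inside `V`. -/
def IsMisiurewiczWith (f : ℝ → ℝ) (V : Set ℝ) : Prop :=
  ∃ (lam d₀ : ℝ) (M₀ : ℕ), 0 < lam ∧ 0 < M₀ ∧ 0 < d₀ ∧ d₀ ≤ 1 ∧
    -- (A1)
    (∀ (n : ℕ) (x : ℝ), M₀ ≤ n → (∀ k < n, f^[k] x ∉ V) →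
      Real.exp (lam * n) ≤ |deriv (f^[n]) x|) ∧
    -- (A2)
    (∀ (n : ℕ) (x : ℝ), 0 < n → (∀ k < n, f^[k] x ∉ V) → f^[n] x ∈ V →
      d₀ * Real.exp (lam * n) ≤ |deriv (f^[n]) x|) ∧
    -- (B)
    (∀ c : ℝ, deriv f c = 0 → ∀ n : ℕ, 0 < n → f^[n] c ∉ V) ∧
    -- (C1)
    (∀ x ∈ V, deriv (deriv f) x ≠ 0) ∧
    -- (C2)
    (∀ x ∈ V, deriv f x ≠ 0 → ∃ p : ℕ, 0 < p ∧
      (∀ j, 0 < j → j < p → f^[j] x ∉ V) ∧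
      d₀⁻¹ * Real.exp (lam * p / 3) ≤ |deriv (f^[p]) x|)

/-!
Write `f' = L Φ'`. Because the two critical points are nondegenerate and are the only zeros of
`Φ'`, the function `|Φ'|` grows at least like `k₁` times the distance to the critical set, up to a
fixed level `m > 0`. For `L` large, `V` therefore lies in a small neighbourhood of the critical
set and `|f'| > K ≥ 2` outside `V`, which gives (A1) and (A2) with `λ = log 2`; the same bound
turns `d(fⁿ c, C) ≥ σ` into `|f'(fⁿ c)| ≥ K³ > K`, which is (B).

For (C2), a point `x ∈ V` lies near a critical point `c`. While `|fʲ x - fʲ c| ≤ σ / 2`, the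
hypothesis on the orbit of `c` gives `|f'| ≥ K³` on the ball around `fʲ c`, so this distance
grows by a factor `K³` per step and first exceeds `σ / 2` at some time `p`. On these balls `f'`
has distortion at most `Q = 1 + 2C/k₁` (`C` bounds `|Φ''|`), so the product `P` of `|f'|` along
`f x, …, fᵖ⁻¹ x` satisfies both `P ≥ K³⁽ᵖ⁻¹⁾` and `P ≥ (σ / 2) / (Qᵖ⁻¹ |f x - f c|)`. Since
`|f x - f c| ≤ L C |x - c|²` while `|f'(x)| ≥ L k₁ |x - c|`, multiplying the two bounds gives
`|(fᵖ)'(x)|² = |f'(x)|² P² ≥ 2ᵖ`.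
-/

open Function

section CircleDistance

lemma dCirc_le (x y : ℝ) (k : ℤ) : dCirc x y ≤ |x - y - 2 * Real.pi * k| :=
  ciInf_le ⟨0, by rintro _ ⟨k', rfl⟩; positivity⟩ k

lemma exists_abs_lt_of_dCirc_lt {x y r : ℝ} (h : dCirc x y < r) :
    ∃ k : ℤ, |x - y - 2 * Real.pi * k| < r :=
  exists_lt_of_ciInf_lt h

lemma dCirc_le_dCirc_add_abs (x x' y : ℝ) : dCirc x y ≤ dCirc x' y + |x - x'| := by
  suffices dCirc x y - |x - x'| ≤ dCirc x' y by linarith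
  refine le_ciInf fun k => ?_
  have hsub := abs_sub_abs_le_abs_sub (x - y - 2 * Real.pi * k) (x' - y - 2 * Real.pi * k)
  rw [show x - y - 2 * Real.pi * k - (x' - y - 2 * Real.pi * k) = x - x' by ring] at hsub
  linarith [dCirc_le x y k]

lemma continuous_dCirc (y : ℝ) : Continuous fun x => dCirc x y :=
  (LipschitzWith.of_le_add fun x x' => by
    simpa only [Real.dist_eq] using dCirc_le_dCirc_add_abs x x' y).continuous

lemma periodic_dCirc (y : ℝ) : Periodic (fun x => dCirc x y) (2 * Real.pi) := by
  intro x
  simp only [dCirc]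
  rw [← (Equiv.addRight (1 : ℤ)).iInf_comp]
  congr 1
  ext k
  simp only [Equiv.coe_addRight, Int.cast_add, Int.cast_one]
  ring_nf

/-- The circle distance `d(x, C)` from `x` to the critical set `C = {c₁, c₂}`. -/
noncomputable def critDist (c₁ c₂ x : ℝ) : ℝ := min (dCirc x c₁) (dCirc x c₂)

variable {c₁ c₂ : ℝ}

lemma critDist_le_critDist_add_abs (x x' : ℝ) :
    critDist c₁ c₂ x ≤ critDist c₁ c₂ x' + |x - x'| := by
  simp only [critDist, ← min_add_add_right]
  exact min_le_min (dCirc_le_dCirc_add_abs x x' c₁) (dCirc_le_dCirc_add_abs x x' c₂)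

lemma continuous_critDist : Continuous (critDist c₁ c₂) :=
  (continuous_dCirc c₁).min (continuous_dCirc c₂)

lemma periodic_critDist : Periodic (critDist c₁ c₂) (2 * Real.pi) := fun x => by
  simp only [critDist, periodic_dCirc c₁ x, periodic_dCirc c₂ x]

lemma critDist_le_abs_sub {c x : ℝ}
    (hc : (∃ k : ℤ, c = c₁ + 2 * Real.pi * k) ∨ (∃ k : ℤ, c = c₂ + 2 * Real.pi * k)) :
    critDist c₁ c₂ x ≤ |x - c| := by
  rcases hc with ⟨k, rfl⟩ | ⟨k, rfl⟩
  · exact (min_le_left _ _).trans ((dCirc_le x c₁ k).trans_eq (by ring_nf))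
  · exact (min_le_right _ _).trans ((dCirc_le x c₂ k).trans_eq (by ring_nf))

lemma exists_abs_sub_lt_of_critDist_lt {x r : ℝ} (h : critDist c₁ c₂ x < r) :
    ∃ c, ((∃ k : ℤ, c = c₁ + 2 * Real.pi * k) ∨ (∃ k : ℤ, c = c₂ + 2 * Real.pi * k)) ∧
      |x - c| < r := by
  rcases min_lt_iff.mp h with h | h
  · obtain ⟨k, hk⟩ := exists_abs_lt_of_dCirc_lt h
    exact ⟨c₁ + 2 * Real.pi * k, Or.inl ⟨k, rfl⟩, by rwa [← sub_sub]⟩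
  · obtain ⟨k, hk⟩ := exists_abs_lt_of_dCirc_lt h
    exact ⟨c₂ + 2 * Real.pi * k, Or.inr ⟨k, rfl⟩, by rwa [← sub_sub]⟩

end CircleDistance

section Calculus

variable {F F' : ℝ → ℝ}

theorem exists_sub_eq_mul_of_hasDerivAt (hF : ∀ y, HasDerivAt F (F' y) y) {a b : ℝ}
    (hab : a ≠ b) : ∃ ξ, 0 < |ξ - a| ∧ |ξ - a| < |b - a| ∧ F b - F a = F' ξ * (b - a) := by
  rcases hab.lt_or_gt with h | h
  · obtain ⟨ξ, ⟨h₁, h₂⟩, hξ⟩ := exists_hasDerivAt_eq_slope F F' h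
      (fun y _ => (hF y).continuousAt.continuousWithinAt) fun y _ => hF y
    refine ⟨ξ, ?_, ?_, ?_⟩
    · rw [abs_of_pos (by linarith)]; linarith
    · rw [abs_of_pos (by linarith), abs_of_pos (by linarith)]; linarith
    · rw [hξ, div_mul_cancel₀ _ (by linarith)]
  · obtain ⟨ξ, ⟨h₁, h₂⟩, hξ⟩ := exists_hasDerivAt_eq_slope F F' h
      (fun y _ => (hF y).continuousAt.continuousWithinAt) fun y _ => hF y
    refine ⟨ξ, ?_, ?_, ?_⟩
    · rw [abs_of_neg (by linarith)]; linarith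
    · rw [abs_of_neg (by linarith), abs_of_neg (by linarith)]; linarith
    · rw [hξ, div_mul_eq_mul_div, eq_div_iff (by linarith)]; ring

theorem mul_abs_sub_le_abs_of_le_abs_deriv (hF : ∀ y, HasDerivAt F (F' y) y) {c δ κ u : ℝ}
    (hc : F c = 0) (hκ : ∀ v, |v - c| ≤ δ → κ ≤ |F' v|) (hu : |u - c| ≤ δ) :
    κ * |u - c| ≤ |F u| := by
  rcases eq_or_ne c u with rfl | hcu
  · simp
  obtain ⟨ξ, -, hξ, hmvt⟩ := exists_sub_eq_mul_of_hasDerivAt hF hcu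
  rw [← sub_zero (F u), ← hc, hmvt, abs_mul]
  exact mul_le_mul_of_nonneg_right (hκ ξ (hξ.le.trans hu)) (abs_nonneg _)

theorem hasDerivAt_iterate (hF : ∀ y, HasDerivAt F (F' y) y) (n : ℕ) (x : ℝ) :
    HasDerivAt F^[n] (∏ j ∈ Finset.range n, F' (F^[j] x)) x := by
  induction n with
  | zero => simpa using hasDerivAt_id x
  | succ n ih =>
    rw [iterate_succ']
    simpa [Finset.prod_range_succ, mul_comm] using (hF (F^[n] x)).comp x ih

theorem pow_le_abs_deriv_iterate (hF : ∀ y, HasDerivAt F (F' y) y) {Λ x : ℝ} {n : ℕ}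
    (hΛ : 0 ≤ Λ) (h : ∀ k < n, Λ ≤ |F' (F^[k] x)|) : Λ ^ n ≤ |deriv F^[n] x| := by
  rw [(hasDerivAt_iterate hF n x).deriv, Finset.abs_prod]
  calc Λ ^ n = ∏ _k ∈ Finset.range n, Λ := by rw [Finset.prod_const, Finset.card_range]
    _ ≤ _ := Finset.prod_le_prod (fun _ _ => hΛ) fun k hk => h k (Finset.mem_range.mp hk)

theorem exp_log_two_mul_le_abs_deriv_iterate {F : ℝ → ℝ} (hF : Differentiable ℝ F) {K x : ℝ}
    {n : ℕ} (hK : 2 ≤ K) (h : ∀ k < n, F^[k] x ∉ {y | |deriv F y| ≤ K}) :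
    Real.exp (Real.log 2 * n) ≤ |deriv F^[n] x| := by
  rw [mul_comm, Real.exp_nat_mul, Real.exp_log two_pos]
  exact pow_le_abs_deriv_iterate (fun y => (hF y).hasDerivAt) zero_le_two fun k hk =>
    hK.trans (not_le.mp (h k hk)).le

end Calculus

section Binding

theorem exists_forall_le_and_lt_of_mul_le {u : ℕ → ℝ} {r Λ : ℝ} (hΛ : 1 < Λ) (h0 : 0 < u 0)
    (hu : ∀ n, u n ≤ r → Λ * u n ≤ u (n + 1)) : ∃ n, (∀ j < n, u j ≤ r) ∧ r < u n := by
  have hex : ∃ n, r < u n := by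
    by_contra! hle
    have hgrow : ∀ n, Λ ^ n * u 0 ≤ u n := by
      intro n
      induction n with
      | zero => simp
      | succ n ih =>
        calc Λ ^ (n + 1) * u 0 = Λ * (Λ ^ n * u 0) := by ring
          _ ≤ Λ * u n := by gcongr
          _ ≤ u (n + 1) := hu n (hle n)
    obtain ⟨n, hn⟩ := pow_unbounded_of_one_lt (r / u 0) hΛ
    have := (div_lt_iff₀ h0).mp hn
    linarith [hgrow n, hle n]
  classical
  exact ⟨Nat.find hex, fun j hj => not_lt.mp (Nat.find_min hex hj), Nat.find_spec hex⟩

theorem le_pow_mul_prod_mul_of_le_mul {u v : ℕ → ℝ} {Q : ℝ} (hQ : 0 ≤ Q) (hv : ∀ j, 0 ≤ v j)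
    {n : ℕ} (h : ∀ j < n, u (j + 1) ≤ Q * v j * u j) :
    u n ≤ Q ^ n * (∏ j ∈ Finset.range n, v j) * u 0 := by
  induction n with
  | zero => simp
  | succ n ih =>
    calc u (n + 1) ≤ Q * v n * u n := h n n.lt_succ_self
      _ ≤ Q * v n * (Q ^ n * (∏ j ∈ Finset.range n, v j) * u 0) :=
        mul_le_mul_of_nonneg_left (ih fun j hj => h j (hj.trans n.lt_succ_self))
          (mul_nonneg hQ (hv n))
      _ = _ := by rw [Finset.prod_range_succ]; ring

variable {F F' : ℝ → ℝ}

theorem binding_step (hF : ∀ y, HasDerivAt F (F' y) y) {a b r Λ Q : ℝ}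
    (hexp : ∀ w, |w - a| ≤ r → Λ ≤ |F' w|) (hdist : ∀ w, |w - a| ≤ r → |F' w| ≤ Q * |F' b|)
    (hb : |b - a| ≤ r) :
    Λ * |b - a| ≤ |F b - F a| ∧ |F b - F a| ≤ Q * |F' b| * |b - a| := by
  rcases eq_or_ne a b with rfl | hab
  · simp
  obtain ⟨ξ, -, hξ, hmvt⟩ := exists_sub_eq_mul_of_hasDerivAt hF hab
  rw [hmvt, abs_mul]
  exact ⟨mul_le_mul_of_nonneg_right (hexp ξ (hξ.le.trans hb)) (abs_nonneg _),
    mul_le_mul_of_nonneg_right (hdist ξ (hξ.le.trans hb)) (abs_nonneg _)⟩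

theorem exists_binding_period (hF : ∀ y, HasDerivAt F (F' y) y) {x c r Λ Q : ℝ} (hΛ : 1 < Λ)
    (hQ : 0 ≤ Q) (hexp : ∀ j ≥ 1, ∀ w, |w - F^[j] c| ≤ r → Λ ≤ |F' w|)
    (hdist : ∀ j ≥ 1, ∀ w w', |w - F^[j] c| ≤ r → |w' - F^[j] c| ≤ r → |F' w| ≤ Q * |F' w'|)
    (hx : F x ≠ F c) :
    ∃ n, (∀ j < n, |F^[j + 1] x - F^[j + 1] c| ≤ r) ∧
      r < Q ^ n * (∏ j ∈ Finset.range n, |F' (F^[j + 1] x)|) * |F x - F c| := by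
  set u : ℕ → ℝ := fun j => |F^[j + 1] x - F^[j + 1] c|
  have hstep : ∀ j, u j ≤ r →
      Λ * u j ≤ u (j + 1) ∧ u (j + 1) ≤ Q * |F' (F^[j + 1] x)| * u j := fun j hj => by
    simp only [u, iterate_succ_apply' F (j + 1)]
    exact binding_step hF (hexp _ j.succ_pos) (fun w hw => hdist _ j.succ_pos w _ hw hj) hj
  obtain ⟨n, hle, hlt⟩ := exists_forall_le_and_lt_of_mul_le hΛ
    (abs_pos.mpr (sub_ne_zero.mpr hx)) fun j hj => (hstep j hj).1
  refine ⟨n, hle, hlt.trans_le ?_⟩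
  exact le_pow_mul_prod_mul_of_le_mul hQ (fun _ => abs_nonneg _) fun j hj => (hstep j (hle j hj)).2

theorem two_pow_succ_le_sq {A P D r Λ Q : ℝ} {n : ℕ} (hQ : 0 < Q) (hΛQ : 2 * Q ≤ Λ)
    (hP : Λ ^ n ≤ P) (hr : r < Q ^ n * P * D) (hD : 0 < D) (hA : 2 * D ≤ A ^ 2 * r) :
    (2 : ℝ) ^ (n + 1) ≤ (A * P) ^ 2 := by
  have hQD : 0 < Q ^ n * D := by positivity
  have hΛn : 0 ≤ Λ ^ n := pow_nonneg (by linarith) n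
  have hP0 : 0 ≤ P := hΛn.trans hP
  have hAr : 0 ≤ A ^ 2 * r := by linarith
  refine le_of_mul_le_mul_right ?_ hQD
  calc 2 ^ (n + 1) * (Q ^ n * D) = (2 * Q) ^ n * (2 * D) := by ring
    _ ≤ Λ ^ n * (A ^ 2 * r) := by gcongr
    _ ≤ P * (A ^ 2 * (Q ^ n * P * D)) := by gcongr
    _ = (A * P) ^ 2 * (Q ^ n * D) := by ring

theorem exp_log_two_mul_div_three_le {y : ℝ} {p : ℕ} (h : (2 : ℝ) ^ p ≤ y ^ 2) :
    Real.exp (Real.log 2 * p / 3) ≤ |y| := by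
  rw [← pow_le_pow_iff_left₀ (Real.exp_pos _).le (abs_nonneg y) two_ne_zero, sq_abs,
    ← Real.exp_nat_mul]
  refine le_trans ?_ h
  rw [← Real.rpow_natCast, Real.rpow_def_of_pos two_pos, Real.exp_le_exp]
  have : 0 ≤ Real.log 2 * p := by positivity
  push_cast
  linarith

theorem exists_return_of_binding (hF : ∀ y, HasDerivAt F (F' y) y) {x c r Λ Q K : ℝ}
    (hK : K < Λ) (hQ : 1 ≤ Q) (hΛQ : 2 * Q ≤ Λ)
    (hexp : ∀ j ≥ 1, ∀ w, |w - F^[j] c| ≤ r → Λ ≤ |F' w|)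
    (hdist : ∀ j ≥ 1, ∀ w w', |w - F^[j] c| ≤ r → |w' - F^[j] c| ≤ r → |F' w| ≤ Q * |F' w'|)
    (hx : F x ≠ F c) (hA : 2 * |F x - F c| ≤ |F' x| ^ 2 * r) :
    ∃ p, 0 < p ∧ (∀ j, 0 < j → j < p → K < |F' (F^[j] x)|) ∧
      Real.exp (Real.log 2 * p / 3) ≤ |deriv F^[p] x| := by
  obtain ⟨n, hshadow, hr⟩ := exists_binding_period hF (by linarith) (by linarith) hexp hdist hx
  have hexpand : ∀ j < n, Λ ≤ |F' (F^[j + 1] x)| := fun j hj =>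
    hexp (j + 1) j.succ_pos _ (hshadow j hj)
  refine ⟨n + 1, n.succ_pos, fun j hj hjp => ?_, exp_log_two_mul_div_three_le ?_⟩
  · obtain ⟨i, rfl⟩ : ∃ i, j = i + 1 := ⟨j - 1, by omega⟩
    exact hK.trans_le (hexpand i (by omega))
  · rw [(hasDerivAt_iterate hF _ x).deriv, Finset.prod_range_succ', iterate_zero_apply, mul_comm,
      mul_pow, ← sq_abs, ← sq_abs (∏ j ∈ Finset.range n, _), Finset.abs_prod, ← mul_pow]
    refine two_pow_succ_le_sq (by linarith) hΛQ ?_ hr (abs_pos.mpr (sub_ne_zero.mpr hx)) hA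
    calc Λ ^ n = ∏ _j ∈ Finset.range n, Λ := by rw [Finset.prod_const, Finset.card_range]
      _ ≤ _ := Finset.prod_le_prod (fun _ _ => by linarith) fun j hj =>
        hexpand j (Finset.mem_range.mp hj)

end Binding

section CriticalPoints

protected lemma Function.Periodic.deriv {f : ℝ → ℝ} {p : ℝ} (h : Periodic f p) :
    Periodic (deriv f) p :=
  fun x => by rw [← deriv_comp_add_const, h.funext]

theorem abs_sub_le_mul_abs_sub {g g' : ℝ → ℝ} (hg : ∀ y, HasDerivAt g (g' y) y) {C : ℝ}
    (hC : ∀ y, |g' y| ≤ C) (u v : ℝ) : |g u - g v| ≤ C * |u - v| := by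
  rcases eq_or_ne v u with rfl | hvu
  · simp
  obtain ⟨ξ, -, -, hmvt⟩ := exists_sub_eq_mul_of_hasDerivAt hg hvu
  rw [hmvt, abs_mul]
  exact mul_le_mul_of_nonneg_right (hC ξ) (abs_nonneg _)

lemma exists_pos_forall_abs_sub_le_le_abs {h : ℝ → ℝ} {c κ : ℝ} (hc : ContinuousAt h c)
    (hκ : κ < |h c|) : ∃ δ > 0, ∀ u, |u - c| ≤ δ → κ ≤ |h u| := by
  obtain ⟨ε, hε, hball⟩ := Metric.eventually_nhds_iff.mp (hc.abs.eventually (lt_mem_nhds hκ))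
  refine ⟨ε / 2, half_pos hε, fun u hu => (hball ?_).le⟩
  rw [Real.dist_eq]
  linarith

theorem exists_pos_forall_near_lifts_le_abs {h : ℝ → ℝ} {p κ c₁ c₂ : ℝ} (hcont : Continuous h)
    (hper : Periodic h p) (h₁ : κ < |h c₁|) (h₂ : κ < |h c₂|) :
    ∃ δ > 0, ∀ c, ((∃ k : ℤ, c = c₁ + p * k) ∨ (∃ k : ℤ, c = c₂ + p * k)) →
      ∀ u, |u - c| ≤ δ → κ ≤ |h u| := by
  obtain ⟨δ₁, hδ₁, hb₁⟩ := exists_pos_forall_abs_sub_le_le_abs hcont.continuousAt h₁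
  obtain ⟨δ₂, hδ₂, hb₂⟩ := exists_pos_forall_abs_sub_le_le_abs hcont.continuousAt h₂
  refine ⟨min δ₁ δ₂, lt_min hδ₁ hδ₂, ?_⟩
  rintro c (⟨k, rfl⟩ | ⟨k, rfl⟩) u hu <;> rw [← hper.sub_int_mul_eq k, mul_comm (k : ℝ)]
  · exact hb₁ _ (by rw [sub_right_comm, sub_sub]; exact hu.trans (min_le_left _ _))
  · exact hb₂ _ (by rw [sub_right_comm, sub_sub]; exact hu.trans (min_le_right _ _))

theorem exists_pos_le_of_periodic {φ ψ : ℝ → ℝ} {p δ : ℝ} (hp : 0 < p) (hφ : Continuous φ)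
    (hψ : Continuous ψ) (hφp : Periodic φ p) (hψp : Periodic ψ p)
    (hpos : ∀ y, δ ≤ ψ y → 0 < φ y) : ∃ m > 0, ∀ y, δ ≤ ψ y → m ≤ φ y := by
  have hS : IsCompact (Icc 0 p ∩ {y | δ ≤ ψ y}) :=
    isCompact_Icc.inter_right (isClosed_le continuous_const hψ)
  obtain ⟨m, hm, hmin⟩ := hS.exists_forall_le' hφ.continuousOn fun y hy => hpos y hy.2
  refine ⟨m, hm, fun y hy => ?_⟩
  have hpair : Periodic (fun y => (φ y, ψ y)) p := fun y => by simp only [hφp y, hψp y]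
  obtain ⟨y', hy', heq⟩ := hpair.exists_mem_Ico₀ hp y
  simp only [Prod.mk.injEq] at heq
  rw [heq.1]
  exact hmin y' ⟨Ico_subset_Icc_self hy', show δ ≤ ψ y' from heq.2 ▸ hy⟩

theorem exists_critical_bounds {g : ℝ → ℝ} {c₁ c₂ κ : ℝ} (hg : Differentiable ℝ g)
    (hg' : Continuous (deriv g)) (hper : Periodic g (2 * Real.pi)) (hz₁ : g c₁ = 0)
    (hz₂ : g c₂ = 0) (honly : ∀ x : ℝ, g x = 0 →
      (∃ k : ℤ, x = c₁ + 2 * Real.pi * k) ∨ (∃ k : ℤ, x = c₂ + 2 * Real.pi * k))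
    (hκ : 0 < κ) (h₁ : κ < |deriv g c₁|) (h₂ : κ < |deriv g c₂|) :
    ∃ δ > 0, ∃ m > 0, (∀ c, g c = 0 → ∀ u, |u - c| ≤ δ → κ ≤ |deriv g u|) ∧
      (∀ y, min (κ * critDist c₁ c₂ y) m ≤ |g y|) ∧
      (∀ y, |g y| < m → ∃ c, g c = 0 ∧ |y - c| < δ) := by
  have hlift : ∀ c, ((∃ k : ℤ, c = c₁ + 2 * Real.pi * k) ∨ (∃ k : ℤ, c = c₂ + 2 * Real.pi * k)) →
      g c = 0 := by
    rintro c (⟨k, rfl⟩ | ⟨k, rfl⟩) <;> rw [mul_comm, hper.int_mul k] <;> assumption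
  obtain ⟨δ, hδ, hnear⟩ := exists_pos_forall_near_lifts_le_abs hg' hper.deriv h₁ h₂
  obtain ⟨m₀, hm₀, hfar⟩ := exists_pos_le_of_periodic Real.two_pi_pos hg.continuous.abs
    continuous_critDist (fun y => congrArg abs (hper y)) periodic_critDist fun y hy =>
      abs_pos.mpr fun hy0 => by
        have := critDist_le_abs_sub (x := y) (honly y hy0)
        rw [sub_self, abs_zero] at this
        linarith
  have hlow_near : ∀ y, critDist c₁ c₂ y < δ → κ * critDist c₁ c₂ y ≤ |g y| := fun y hy => by
    obtain ⟨c, hc, hyc⟩ := exists_abs_sub_lt_of_critDist_lt hy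
    exact (mul_le_mul_of_nonneg_left (critDist_le_abs_sub hc) hκ.le).trans
      (mul_abs_sub_le_abs_of_le_abs_deriv (fun y => (hg y).hasDerivAt) (hlift c hc)
        (hnear c hc) hyc.le)
  -- capping `m` at `κ δ` makes `|g y| < m` force `critDist y < δ`
  set m := min m₀ (κ * δ)
  have hlow : ∀ y, min (κ * critDist c₁ c₂ y) m ≤ |g y| := fun y => by
    rcases lt_or_ge (critDist c₁ c₂ y) δ with h | h
    · exact (min_le_left _ _).trans (hlow_near y h)
    · exact (min_le_right _ _).trans ((min_le_left _ _).trans (hfar y h))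
  refine ⟨δ, hδ, m, lt_min hm₀ (mul_pos hκ hδ), fun c hc => hnear c (honly c hc), hlow,
    fun y hy => ?_⟩
  have hκd : κ * critDist c₁ c₂ y < κ * δ := by
    have := (hlow y).trans_lt hy
    rw [min_lt_iff, lt_self_iff_false, or_false] at this
    exact this.trans_le (min_le_right _ _)
  obtain ⟨c, hc, hyc⟩ := exists_abs_sub_lt_of_critDist_lt (lt_of_mul_lt_mul_left hκd hκ.le)
  exact ⟨c, hlift c hc, hyc⟩

end CriticalPoints

section Family

variable {Φ g g' : ℝ → ℝ} {c₁ c₂ k₁ C δ m K L ζ a : ℝ}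

lemma hasDerivAt_family (hΦ : Differentiable ℝ Φ) (y : ℝ) :
    HasDerivAt (fun θ => ζ + L * Φ θ + a) (L * deriv Φ y) y :=
  (((hΦ y).hasDerivAt.const_mul L).const_add ζ).add_const a

lemma deriv_family (hΦ : Differentiable ℝ Φ) :
    deriv (fun θ => ζ + L * Φ θ + a) = fun y => L * deriv Φ y :=
  funext fun y => (hasDerivAt_family hΦ y).deriv

theorem abs_sub_le_mul_sq_of_eq_zero (hΦ : ∀ y, HasDerivAt Φ (g y) y)
    (hg : ∀ y, HasDerivAt g (g' y) y) (hC : ∀ y, |g' y| ≤ C) {c : ℝ} (hc : g c = 0) (x : ℝ) :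
    |Φ x - Φ c| ≤ C * |x - c| ^ 2 := by
  rcases eq_or_ne c x with rfl | hcx
  · simp
  obtain ⟨ξ, -, hξ, hmvt⟩ := exists_sub_eq_mul_of_hasDerivAt hΦ hcx
  have hgξ := abs_sub_le_mul_abs_sub hg hC ξ c
  rw [hc, sub_zero] at hgξ
  have hC0 : 0 ≤ C := (abs_nonneg _).trans (hC 0)
  rw [hmvt, abs_mul]
  calc |g ξ| * |x - c| ≤ C * |ξ - c| * |x - c| := by gcongr
    _ ≤ C * |x - c| * |x - c| := by gcongr
    _ = C * |x - c| ^ 2 := by ring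

theorem apply_ne_of_near_nondegenerate_zero (hΦ : ∀ y, HasDerivAt Φ (g y) y)
    (hg : ∀ y, HasDerivAt g (g' y) y) {c κ : ℝ} (hκ : 0 < κ) (hc : g c = 0)
    (hnear : ∀ u, |u - c| ≤ δ → κ ≤ |g' u|) {x : ℝ} (hx : |x - c| ≤ δ) (hcx : c ≠ x) :
    Φ x ≠ Φ c := by
  obtain ⟨ξ, hξ₀, hξ, hmvt⟩ := exists_sub_eq_mul_of_hasDerivAt hΦ hcx
  have hgξ : 0 < |g ξ| := (mul_pos hκ hξ₀).trans_le
    (mul_abs_sub_le_abs_of_le_abs_deriv hg hc hnear (hξ.le.trans hx))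
  rw [← sub_ne_zero, hmvt]
  exact mul_ne_zero (abs_pos.mp hgξ) (sub_ne_zero.mpr hcx.symm)

theorem pow_three_le_abs_mul_of_le_critDist (hk₁ : 0 < k₁) (hL : 0 < L) (hm : K ^ 3 ≤ L * m)
    (hlow : ∀ y, min (k₁ * critDist c₁ c₂ y) m ≤ |g y|) {y : ℝ}
    (hy : k₁⁻¹ * L⁻¹ * K ^ 3 ≤ critDist c₁ c₂ y) : K ^ 3 ≤ |L * g y| := by
  rw [abs_mul, abs_of_pos hL]
  have hk : K ^ 3 ≤ L * (k₁ * critDist c₁ c₂ y) :=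
    calc K ^ 3 = L * (k₁ * (k₁⁻¹ * L⁻¹ * K ^ 3)) := by field_simp
      _ ≤ L * (k₁ * critDist c₁ c₂ y) := by gcongr
  calc K ^ 3 ≤ min (L * (k₁ * critDist c₁ c₂ y)) (L * m) := le_min hk hm
    _ = L * min (k₁ * critDist c₁ c₂ y) m := (mul_min_of_nonneg _ _ hL.le).symm
    _ ≤ L * |g y| := by gcongr; exact hlow y

theorem abs_mul_le_one_add_mul_abs_mul (hg : ∀ y, HasDerivAt g (g' y) y) (hC : ∀ y, |g' y| ≤ C)
    (hk₁ : 0 < k₁) (hL : 0 < L) {z w w' : ℝ} (hw : |w - z| ≤ k₁⁻¹ * L⁻¹ * K ^ 3)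
    (hw' : |w' - z| ≤ k₁⁻¹ * L⁻¹ * K ^ 3) (hK : K ^ 3 ≤ |L * g w'|) :
    |L * g w| ≤ (1 + 2 * C / k₁) * |L * g w'| := by
  have hC0 : 0 ≤ C := (abs_nonneg _).trans (hC 0)
  have hww' : |w - w'| ≤ 2 * (k₁⁻¹ * L⁻¹ * K ^ 3) := by
    have := abs_sub_le w z w'
    rw [abs_sub_comm z w'] at this
    linarith
  have hdiff : |L * g w - L * g w'| ≤ 2 * C / k₁ * K ^ 3 := by
    rw [← mul_sub, abs_mul, abs_of_pos hL]
    calc L * |g w - g w'| ≤ L * (C * |w - w'|) := by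
          gcongr; exact abs_sub_le_mul_abs_sub hg hC _ _
      _ ≤ L * (C * (2 * (k₁⁻¹ * L⁻¹ * K ^ 3))) := by gcongr
      _ = 2 * C / k₁ * K ^ 3 := by field_simp
  calc |L * g w| ≤ |L * g w'| + 2 * C / k₁ * K ^ 3 := by
        linarith [abs_sub_abs_le_abs_sub (L * g w) (L * g w')]
    _ ≤ |L * g w'| + 2 * C / k₁ * |L * g w'| := by gcongr
    _ = (1 + 2 * C / k₁) * |L * g w'| := by ring

theorem two_mul_abs_sub_le_sq_mul (hΦ : ∀ y, HasDerivAt Φ (g y) y)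
    (hg : ∀ y, HasDerivAt g (g' y) y) (hC : ∀ y, |g' y| ≤ C) (hk₁ : 0 < k₁) (hL : 0 < L)
    (hK : 2 * C ≤ k₁ * K ^ 3) {c x : ℝ} (hc : g c = 0)
    (hnear : ∀ u, |u - c| ≤ δ → k₁ ≤ |g' u|) (hx : |x - c| ≤ δ) :
    2 * |(ζ + L * Φ x + a) - (ζ + L * Φ c + a)| ≤ |L * g x| ^ 2 * (k₁⁻¹ * L⁻¹ * K ^ 3) := by
  have hgx := mul_abs_sub_le_abs_of_le_abs_deriv hg hc hnear hx
  have hΦx := abs_sub_le_mul_sq_of_eq_zero hΦ hg hC hc x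
  have hC0 : 0 ≤ C := (abs_nonneg _).trans (hC 0)
  have hK3 : 0 ≤ K ^ 3 := (mul_nonneg_iff_of_pos_left hk₁).mp (by linarith)
  rw [show ζ + L * Φ x + a - (ζ + L * Φ c + a) = L * (Φ x - Φ c) by ring, abs_mul, abs_mul,
    abs_of_pos hL]
  calc 2 * (L * |Φ x - Φ c|) ≤ 2 * C * L * |x - c| ^ 2 := by nlinarith
    _ ≤ k₁ * K ^ 3 * L * |x - c| ^ 2 := by gcongr
    _ = (L * (k₁ * |x - c|)) ^ 2 * (k₁⁻¹ * L⁻¹ * K ^ 3) := by field_simp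
    _ ≤ (L * |g x|) ^ 2 * (k₁⁻¹ * L⁻¹ * K ^ 3) := by gcongr

theorem family_exists_return (hΦ : Differentiable ℝ Φ) (hg : Differentiable ℝ (deriv Φ))
    (hC : ∀ y, |deriv (deriv Φ) y| ≤ C) (hk₁ : 0 < k₁) (hL : 0 < L) (hK : 2 + 4 * C / k₁ ≤ K)
    (hm : K ^ 3 ≤ L * m) (hlow : ∀ y, min (k₁ * critDist c₁ c₂ y) m ≤ |deriv Φ y|) {c x : ℝ}
    (hc : deriv Φ c = 0) (hnear : ∀ u, |u - c| ≤ δ → k₁ ≤ |deriv (deriv Φ) u|)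
    (hx : |x - c| ≤ δ) (hcx : c ≠ x)
    (horb : ∀ n ≥ 1,
      2 * k₁⁻¹ * L⁻¹ * K ^ 3 ≤ critDist c₁ c₂ ((fun θ => ζ + L * Φ θ + a)^[n] c)) :
    ∃ p, 0 < p ∧
      (∀ j, 0 < j → j < p → K < |L * deriv Φ ((fun θ => ζ + L * Φ θ + a)^[j] x)|) ∧
      Real.exp (Real.log 2 * p / 3) ≤ |deriv (fun θ => ζ + L * Φ θ + a)^[p] x| := by
  set f := fun θ => ζ + L * Φ θ + a
  set r := k₁⁻¹ * L⁻¹ * K ^ 3 -- `σ / 2`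
  have hΦ' : ∀ y, HasDerivAt Φ (deriv Φ y) y := fun y => (hΦ y).hasDerivAt
  have hg' : ∀ y, HasDerivAt (deriv Φ) (deriv (deriv Φ) y) y := fun y => (hg y).hasDerivAt
  have hC0 : 0 ≤ C / k₁ := div_nonneg ((abs_nonneg _).trans (hC 0)) hk₁.le
  have h2 : 2 * C / k₁ = 2 * (C / k₁) := mul_div_assoc _ _ _
  have h4 : 4 * C / k₁ = 4 * (C / k₁) := mul_div_assoc _ _ _
  have hK2 : 2 ≤ K := by linarith
  have hKK : K < K ^ 3 := by nlinarith [sq_nonneg K]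
  have hexp : ∀ j ≥ 1, ∀ w, |w - f^[j] c| ≤ r → K ^ 3 ≤ |L * deriv Φ w| := fun j hj w hw => by
    refine pow_three_le_abs_mul_of_le_critDist hk₁ hL hm hlow ?_
    have := critDist_le_critDist_add_abs (c₁ := c₁) (c₂ := c₂) (f^[j] c) w
    rw [abs_sub_comm] at this
    linarith [horb j hj]
  have hfx : f x ≠ f c := fun h => apply_ne_of_near_nondegenerate_zero hΦ' hg' hk₁ hc hnear hx hcx
    (mul_left_cancel₀ hL.ne' (by simp only [f] at h; linarith))
  have h2C : 2 * C ≤ k₁ * K ^ 3 := by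
    have := (div_le_iff₀ hk₁).mp (show 2 * C / k₁ ≤ K ^ 3 by linarith)
    linarith
  exact exists_return_of_binding (hasDerivAt_family hΦ) hKK (by linarith) (by linarith) hexp
    (fun j hj w w' hw hw' => abs_mul_le_one_add_mul_abs_mul hg' hC hk₁ hL hw hw' (hexp j hj w' hw'))
    hfx (two_mul_abs_sub_le_sq_mul hΦ' hg' hC hk₁ hL h2C hc hnear hx)

theorem isMisiurewiczWith_family (hΦ : Differentiable ℝ Φ) (hg : Differentiable ℝ (deriv Φ))
    (hC : ∀ y, |deriv (deriv Φ) y| ≤ C) (hk₁ : 0 < k₁) (hm₀ : 0 < m) (hK : 2 + 4 * C / k₁ ≤ K)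
    (hm : K ^ 3 ≤ L * m)
    (hnear : ∀ c, deriv Φ c = 0 → ∀ u, |u - c| ≤ δ → k₁ ≤ |deriv (deriv Φ) u|)
    (hlow : ∀ y, min (k₁ * critDist c₁ c₂ y) m ≤ |deriv Φ y|)
    (hsmall : ∀ y, |deriv Φ y| < m → ∃ c, deriv Φ c = 0 ∧ |y - c| < δ)
    (horb : ∀ c : ℝ, deriv (fun θ => ζ + L * Φ θ + a) c = 0 → ∀ n : ℕ, 1 ≤ n →
      2 * k₁⁻¹ * L⁻¹ * K ^ 3 ≤ critDist c₁ c₂ ((fun θ => ζ + L * Φ θ + a)^[n] c)) :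
    IsMisiurewiczWith (fun θ => ζ + L * Φ θ + a)
      {x : ℝ | |deriv (fun θ => ζ + L * Φ θ + a) x| ≤ K} := by
  set f := fun θ => ζ + L * Φ θ + a
  have hC0 : 0 ≤ C / k₁ := div_nonneg ((abs_nonneg _).trans (hC 0)) hk₁.le
  have hK2 : 2 ≤ K := by linarith [mul_div_assoc 4 C k₁]
  have hKK : K < K ^ 3 := by nlinarith [sq_nonneg K]
  have hL : 0 < L := pos_of_mul_pos_left ((pow_pos (by linarith) 3).trans_le hm) hm₀.le
  have hderiv : deriv f = fun y => L * deriv Φ y := deriv_family hΦ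
  have hfdiff : Differentiable ℝ f := fun y => (hasDerivAt_family hΦ y).differentiableAt
  have hnearV : ∀ x, |deriv f x| ≤ K → ∃ c, deriv Φ c = 0 ∧ |x - c| < δ := fun x hx => by
    rw [hderiv, abs_mul, abs_of_pos hL] at hx
    exact hsmall x (lt_of_mul_lt_mul_left (hx.trans_lt (hKK.trans_le hm)) hL.le)
  refine ⟨Real.log 2, 1, 1, Real.log_pos one_lt_two, one_pos, one_pos, le_rfl,
    fun n x _ hout => exp_log_two_mul_le_abs_deriv_iterate hfdiff hK2 hout,
    fun n x _ hout _ =>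
      (one_mul _).trans_le (exp_log_two_mul_le_abs_deriv_iterate hfdiff hK2 hout),
    fun c hc n hn hmem => ?_, fun x hx => ?_, fun x hx hfx => ?_⟩
  · have hr : 0 ≤ k₁⁻¹ * L⁻¹ * K ^ 3 := by positivity
    have := pow_three_le_abs_mul_of_le_critDist hk₁ hL hm hlow (y := f^[n] c)
      (by linarith [horb c hc n hn])
    have hmem : |deriv f (f^[n] c)| ≤ K := hmem
    rw [hderiv] at hmem
    linarith
  · obtain ⟨c, hc, hxc⟩ := hnearV x hx
    rw [hderiv, deriv_const_mul L (hg x)]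
    exact mul_ne_zero hL.ne' (abs_pos.mp (hk₁.trans_le (hnear c hc x hxc.le)))
  · obtain ⟨c, hc, hxc⟩ := hnearV x hx
    have hcx : c ≠ x := by rintro rfl; simp [hderiv, hc] at hfx
    obtain ⟨p, hp, hesc, hexp⟩ := family_exists_return hΦ hg hC hk₁ hL hK hm hlow hc (hnear c hc)
      hxc.le hcx (horb c (by simp [hderiv, hc]))
    refine ⟨p, hp, fun j hj hjp hmem => ?_, by rwa [inv_one, one_mul]⟩
    have hmem : |deriv f (f^[j] x)| ≤ K := hmem
    rw [hderiv] at hmem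
    linarith [hesc j hj hjp]

end Family

theorem stmt_3_general
    (Φ : ℝ → ℝ) (hΦ : ContDiff ℝ 3 Φ)
    (hper : Function.Periodic Φ (2 * Real.pi))
    (c1 c2 : ℝ)
    (hcrit1 : deriv Φ c1 = 0) (hcrit2 : deriv Φ c2 = 0)
    (hnd1 : deriv (deriv Φ) c1 ≠ 0) (hnd2 : deriv (deriv Φ) c2 ≠ 0)
    (honly : ∀ x : ℝ, deriv Φ x = 0 →
      (∃ k : ℤ, x = c1 + 2 * Real.pi * k) ∨ (∃ k : ℤ, x = c2 + 2 * Real.pi * k))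
    (ζ : ℝ)
    (k₁ : ℝ)
    (hk₁ : k₁ = (1 / 2) * min |deriv (deriv Φ) c1| |deriv (deriv Φ) c2|) :
    ∃ K₀ ≥ (2 : ℝ), ∀ K ≥ K₀, ∃ L₀ > (0 : ℝ), ∀ L ≥ L₀, ∀ a ∈ Ico 0 (2 * Real.pi),
      (∀ c : ℝ, deriv (fun θ => ζ + L * Φ θ + a) c = 0 → ∀ n : ℕ, 1 ≤ n →
        2 * k₁⁻¹ * L⁻¹ * K ^ 3 ≤
          min (dCirc ((fun θ => ζ + L * Φ θ + a)^[n] c) c1)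
              (dCirc ((fun θ => ζ + L * Φ θ + a)^[n] c) c2)) →
      IsMisiurewiczWith (fun θ => ζ + L * Φ θ + a)
        {x : ℝ | |deriv (fun θ => ζ + L * Φ θ + a) x| ≤ K} := by
  have hg : ContDiff ℝ 2 (deriv Φ) := hΦ.deriv'
  have hmin : 0 < min |deriv (deriv Φ) c1| |deriv (deriv Φ) c2| :=
    lt_min (abs_pos.mpr hnd1) (abs_pos.mpr hnd2)
  have hk₁pos : 0 < k₁ := by rw [hk₁]; linarith
  obtain ⟨C, hC⟩ := (hper.deriv.deriv.isBounded_of_continuous Real.two_pi_pos.ne'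
    (hg.continuous_deriv one_le_two)).exists_norm_le
  obtain ⟨δ, -, m, hm, hnear, hlow, hsmall⟩ := exists_critical_bounds
    (hg.differentiable two_ne_zero) (hg.continuous_deriv one_le_two) hper.deriv hcrit1 hcrit2
    honly hk₁pos (by rw [hk₁]; linarith [min_le_left |deriv (deriv Φ) c1| |deriv (deriv Φ) c2|])
    (by rw [hk₁]; linarith [min_le_right |deriv (deriv Φ) c1| |deriv (deriv Φ) c2|])
  have hC0 : 0 ≤ C / k₁ := div_nonneg ((norm_nonneg _).trans (hC _ ⟨0, rfl⟩)) hk₁pos.le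
  refine ⟨2 + 4 * C / k₁, by linarith [mul_div_assoc 4 C k₁], fun K hK =>
    ⟨K ^ 3 / m, div_pos (pow_pos (by linarith [mul_div_assoc 4 C k₁]) 3) hm,
      fun L hL a _ horb => ?_⟩⟩
  exact isMisiurewiczWith_family (hΦ.differentiable (by norm_num))
    (hg.differentiable two_ne_zero) (fun y => hC _ ⟨y, rfl⟩) hk₁pos hm hK
    ((div_le_iff₀ hm).mp hL) hnear hlow hsmall horb

/-- For `f = f_{a,L}(θ) = ζ + L·Φ(θ) + a`,
`k₁ = (1/2)·min{|Φ''(c1)|, |Φ''(c2)|}`, `σ = 2 k₁⁻¹ L⁻¹ K³` and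
`V = {x : |f'(x)| ≤ K}`: there is `K₀ = K₀(Φ) ≥ 2` such that for each `K ≥ K₀`
there is `L₀ = L₀(K,Φ) > 0` so that for all `L ≥ L₀` and all `a ∈ [0,2π)`,
if every critical orbit stays at circle distance `≥ σ` from the critical set
`C = {c1, c2}` for all times `n ≥ 1`, then `f` is a Misiurewicz map with this
choice of neighborhood `V`. -/
theorem stmt_3
    (Φ : ℝ → ℝ) (hΦ : ContDiff ℝ 3 Φ)
    (hper : Function.Periodic Φ (2 * Real.pi))
    (c1 c2 : ℝ) (hc1 : c1 ∈ Ico 0 (2 * Real.pi)) (hc2 : c2 ∈ Ico 0 (2 * Real.pi))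
    (hne : c1 ≠ c2)
    (hcrit1 : deriv Φ c1 = 0) (hcrit2 : deriv Φ c2 = 0)
    (hnd1 : deriv (deriv Φ) c1 ≠ 0) (hnd2 : deriv (deriv Φ) c2 ≠ 0)
    (honly : ∀ x : ℝ, deriv Φ x = 0 →
      (∃ k : ℤ, x = c1 + 2 * Real.pi * k) ∨ (∃ k : ℤ, x = c2 + 2 * Real.pi * k))
    (hval : Φ c1 ≠ Φ c2)
    (ζ : ℝ)
    (k₁ : ℝ)
    (hk₁ : k₁ = (1 / 2) * min |deriv (deriv Φ) c1| |deriv (deriv Φ) c2|) :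
    ∃ K₀ ≥ (2 : ℝ), ∀ K ≥ K₀, ∃ L₀ > (0 : ℝ), ∀ L ≥ L₀, ∀ a ∈ Ico 0 (2 * Real.pi),
      (∀ c : ℝ, deriv (fun θ => ζ + L * Φ θ + a) c = 0 → ∀ n : ℕ, 1 ≤ n →
        2 * k₁⁻¹ * L⁻¹ * K ^ 3 ≤
          min (dCirc ((fun θ => ζ + L * Φ θ + a)^[n] c) c1)
              (dCirc ((fun θ => ζ + L * Φ θ + a)^[n] c) c2)) →
      IsMisiurewiczWith (fun θ => ζ + L * Φ θ + a)
        {x : ℝ | |deriv (fun θ => ζ + L * Φ θ + a) x| ≤ K} :=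
  stmt_3_general Φ hΦ hper c1 c2 hcrit1 hcrit2 hnd1 hnd2 honly ζ k₁ hk₁
end

section
/- There exists μ₀ > 0 such that for every μ ∈ (0, μ₀] and every (z₀, θ₀) with K₄^{−1} ≤ z₀ ≤ K₄ and θ₀ ∈ S¹, one has K₄^{−1} ≤ z₁/z̃ ≤ K₄, where z₁ = (z₀² + 2L μ^{ρ₂−ρ₁} z₀ sin θ₀ + L² μ^{2(ρ₂−ρ₁)})^{1/2} and z̃ = L μ^{ρ₂−ρ₁} − K₄. In other words, for μ sufficiently small the composition G_{τ(μ)} ∘ κ of the kick map with the time-τ(μ) linear relaxation flow maps the annulus 𝒜 = {(z,θ) : K₄^{−1} ≤ z ≤ K₄} into itself. -/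
/-!
The kicked point is the sum of a vector of length `M = L μ^{ρ₂-ρ₁}` and the original point, of
radius `z₀ ≤ K₄`, so by the triangle inequality `M - K₄ ≤ z₁ ≤ M + K₄`.
Dividing by `z̃ = M - K₄` the lower bound gives `z₁ / z̃ ≥ 1 > K₄⁻¹`, and the upper bound gives
`z₁ / z̃ ≤ K₄` as soon as `M ≥ K₄ (K₄ + 1) / (K₄ - 1)`, which holds for small `μ` because
`ρ₂ - ρ₁ < 0`.
-/

open Set Filter Topology

theorem exists_pos_forall_Ioc_le_const_mul_rpow {e : ℝ} (he : e < 0) {L : ℝ} (hL : 0 < L)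
    (C : ℝ) : ∃ μ₀ > (0 : ℝ), ∀ μ ∈ Ioc (0 : ℝ) μ₀, C ≤ L * μ ^ e := by
  have hlarge : ∀ᶠ μ in 𝓝[>] (0 : ℝ), C ≤ L * μ ^ e :=
    ((tendsto_rpow_neg_nhdsGT_zero he).const_mul_atTop hL).eventually_ge_atTop C
  exact mem_nhdsGT_iff_exists_Ioc_subset.mp hlarge

namespace Real

-- `z² + 2 M z sin θ + M²` is the squared norm of `z e^{iθ} + i M`.
theorem sub_le_sqrt_sq_add_two_mul_mul_sin_add_sq {M z : ℝ} (hMz : 0 ≤ M * z) (θ : ℝ) :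
    M - z ≤ √(z ^ 2 + 2 * M * z * sin θ + M ^ 2) := by
  refine (le_abs_self _).trans (abs_le_sqrt ?_)
  nlinarith [neg_one_le_sin θ]

theorem sqrt_sq_add_two_mul_mul_sin_add_sq_le {M z : ℝ} (hM : 0 ≤ M) (hz : 0 ≤ z) (θ : ℝ) :
    √(z ^ 2 + 2 * M * z * sin θ + M ^ 2) ≤ M + z := by
  refine sqrt_le_iff.mpr ⟨by positivity, ?_⟩
  nlinarith [sin_le_one θ, mul_nonneg hM hz]

end Real

theorem div_sub_mem_Icc_inv_of_sub_le_of_le_add {K M z r : ℝ} (hK : 1 < K)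
    (hM : K * (K + 1) / (K - 1) ≤ M) (hz : z ≤ K) (hr_ge : M - z ≤ r) (hr_le : r ≤ M + z) :
    r / (M - K) ∈ Icc K⁻¹ K := by
  have hK1 : 0 < K - 1 := by linarith
  have hM' : K * (K + 1) ≤ M * (K - 1) := (div_le_iff₀ hK1).mp hM
  have hMK : 0 < M - K := by nlinarith
  constructor
  · have hKinv : K⁻¹ ≤ 1 := inv_le_one_of_one_le₀ hK.le
    rw [le_div_iff₀ hMK]
    nlinarith
  · rw [div_le_iff₀ hMK]
    nlinarith

theorem stmt_7_general
    (K₄ L ρ₁ ρ₂ : ℝ) (hK₄ : 1 < K₄) (hL : 0 < L)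
    (hρ : ρ₂ < ρ₁) :
    ∃ μ₀ > (0 : ℝ), ∀ μ ∈ Ioc (0 : ℝ) μ₀, ∀ z₀ ∈ Icc K₄⁻¹ K₄, ∀ θ₀ : ℝ,
      K₄⁻¹ ≤
        Real.sqrt (z₀ ^ 2 + 2 * L * μ ^ (ρ₂ - ρ₁) * z₀ * Real.sin θ₀
            + L ^ 2 * μ ^ (2 * (ρ₂ - ρ₁))) / (L * μ ^ (ρ₂ - ρ₁) - K₄) ∧
      Real.sqrt (z₀ ^ 2 + 2 * L * μ ^ (ρ₂ - ρ₁) * z₀ * Real.sin θ₀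
            + L ^ 2 * μ ^ (2 * (ρ₂ - ρ₁))) / (L * μ ^ (ρ₂ - ρ₁) - K₄) ≤ K₄ := by
  obtain ⟨μ₀, hμ₀, hlarge⟩ := exists_pos_forall_Ioc_le_const_mul_rpow (sub_neg.mpr hρ) hL
    (K₄ * (K₄ + 1) / (K₄ - 1))
  refine ⟨μ₀, hμ₀, fun μ hμ z₀ hz₀ θ₀ => ?_⟩
  have hz₀pos : 0 ≤ z₀ := (inv_pos.mpr (by linarith)).le.trans hz₀.1
  have hM : 0 ≤ L * μ ^ (ρ₂ - ρ₁) := by have := hμ.1; positivity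
  have hsq : z₀ ^ 2 + 2 * L * μ ^ (ρ₂ - ρ₁) * z₀ * Real.sin θ₀ + L ^ 2 * μ ^ (2 * (ρ₂ - ρ₁))
      = z₀ ^ 2 + 2 * (L * μ ^ (ρ₂ - ρ₁)) * z₀ * Real.sin θ₀ + (L * μ ^ (ρ₂ - ρ₁)) ^ 2 := by
    rw [mul_comm 2 (ρ₂ - ρ₁), Real.rpow_mul hμ.1.le, Real.rpow_two]
    ring
  rw [hsq]
  exact div_sub_mem_Icc_inv_of_sub_le_of_le_add hK₄ (hlarge μ hμ) hz₀.2
    (Real.sub_le_sqrt_sq_add_two_mul_mul_sin_add_sq (mul_nonneg hM hz₀pos) θ₀)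
    (Real.sqrt_sq_add_two_mul_mul_sin_add_sq_le hM hz₀pos θ₀)

/-- Fix `K₄ > 1`, `L > 0` and exponents `ρ₁ > ρ₂ > 0`.
With `z₁ = (z₀² + 2L μ^{ρ₂−ρ₁} z₀ sin θ₀ + L² μ^{2(ρ₂−ρ₁)})^{1/2}` (the radial
coordinate of the kicked point) and `z̃ = L μ^{ρ₂−ρ₁} − K₄`, there is `μ₀ > 0` such
that for every `μ ∈ (0, μ₀]` and every `(z₀, θ₀)` with `K₄⁻¹ ≤ z₀ ≤ K₄`:
`K₄⁻¹ ≤ z₁/z̃ ≤ K₄`; i.e. `G_{τ(μ)} ∘ κ` maps the annulus `𝒜` into itself. -/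
theorem stmt_7
    (K₄ L ρ₁ ρ₂ : ℝ) (hK₄ : 1 < K₄) (hL : 0 < L)
    (hρ₂ : 0 < ρ₂) (hρ : ρ₂ < ρ₁) :
    ∃ μ₀ > (0 : ℝ), ∀ μ ∈ Ioc (0 : ℝ) μ₀, ∀ z₀ ∈ Icc K₄⁻¹ K₄, ∀ θ₀ : ℝ,
      K₄⁻¹ ≤
        Real.sqrt (z₀ ^ 2 + 2 * L * μ ^ (ρ₂ - ρ₁) * z₀ * Real.sin θ₀
            + L ^ 2 * μ ^ (2 * (ρ₂ - ρ₁))) / (L * μ ^ (ρ₂ - ρ₁) - K₄) ∧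
      Real.sqrt (z₀ ^ 2 + 2 * L * μ ^ (ρ₂ - ρ₁) * z₀ * Real.sin θ₀
            + L ^ 2 * μ ^ (2 * (ρ₂ - ρ₁))) / (L * μ ^ (ρ₂ - ρ₁) - K₄) ≤ K₄ :=
  stmt_7_general K₄ L ρ₁ ρ₂ hK₄ hL hρ
end
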